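/- Let λ > 0 and α ∈ (0, 1], and let z : ℝ → ℝ be continuous with z(t)/t → 0 and (1/t)∫_0^t z(r)dr → 0 as t → −∞. Suppose B(τ−t) ≥ 0 satisfies B(τ−t) ≤ c·e^{2|z(−t)|}(1 + e^{(9/8)λt}·J(t)) where J(t) = ∫_{−∞}^{−t} e^{(9/8)λ s + 2|∫_{−t}^{s} z(r)dr| + 2|z(s)|} φ(s) ds with φ ≥ 0 and ∫_{−∞}^0 e^{λ s}φ(s) ds < ∞. Then e^{−(5/4)λ t − 2α∫_0^{−t} z(r)dr − 2αz(−t)} B(τ−t) → 0 as t → ∞, uniformly in α ∈ (0,1]. -/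
import Mathlib
open Filter MeasureTheory

lemma aux_sub (f : ℝ → ℝ) (h : Tendsto (fun t => f t / t) atBot (nhds 0))
    {δ : ℝ} (hδ : 0 < δ) : ∃ S : ℝ, S < 0 ∧ ∀ s ≤ S, |f s| ≤ δ * (-s) := by
  obtain ⟨S', hS'⟩ := eventually_atBot.mp (Metric.tendsto_nhds.mp h δ hδ)
  refine ⟨min S' (-1), lt_of_le_of_lt (min_le_right _ _) (by norm_num), ?_⟩
  intro s hs
  have hs0 : s < 0 := lt_of_le_of_lt (hs.trans (min_le_right _ _)) (by norm_num)
  have h1 := hS' s (hs.trans (min_le_left _ _))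
  rw [Real.dist_eq, sub_zero, abs_div] at h1
  have h2 : |f s| < δ * |s| := (div_lt_iff₀ (abs_pos.mpr hs0.ne)).mp h1
  rw [abs_of_neg hs0] at h2
  linarith

set_option maxHeartbeats 2000000 in
/-- Uniform (in `α ∈ (0,1]`) decay of the bounding family `B` under the
pullback decay factor, from the temperedness of `z`. -/
theorem stmt_15 (lam c : ℝ) (hlam : 0 < lam) (hc : 0 < c)
    (z : ℝ → ℝ) (hz : Continuous z)
    (hz1 : Tendsto (fun t => z t / t) atBot (nhds 0))
    (hz2 : Tendsto (fun t => (1 / t) * ∫ r in (0:ℝ)..t, z r) atBot (nhds 0))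
    (φ B : ℝ → ℝ) (hφ : ∀ s, 0 ≤ φ s)
    (hφint : IntegrableOn (fun s => Real.exp (lam * s) * φ s) (Set.Iic 0) volume)
    (hB : ∀ t : ℝ, 0 ≤ t → 0 ≤ B t ∧
      B t ≤ c * Real.exp (2 * |z (-t)|) *
        (1 + Real.exp ((9 / 8) * lam * t) *
          ∫ s in Set.Iic (-t),
            Real.exp ((9 / 8) * lam * s + 2 * |∫ r in (-t)..s, z r| + 2 * |z s|) * φ s)) :
    ∀ ε : ℝ, 0 < ε → ∃ T₀ : ℝ, ∀ t ≥ T₀, ∀ α ∈ Set.Ioc (0:ℝ) 1,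
      Real.exp (-(5 / 4) * lam * t - 2 * α * (∫ r in (0:ℝ)..(-t), z r) - 2 * α * z (-t))
        * B t ≤ ε := by
  intro ε hε
  set δ : ℝ := lam / 128 with hδdef
  have hδ : 0 < δ := by positivity
  set F : ℝ → ℝ := fun s => ∫ r in (0:ℝ)..s, z r with hF
  obtain ⟨S₁, hS₁0, hS₁⟩ := aux_sub z hz1 hδ
  have hz2' : Tendsto (fun t => F t / t) atBot (nhds 0) := by
    refine hz2.congr (fun t => ?_)
    rw [one_div_mul_eq_div]
  obtain ⟨S₂, hS₂0, hS₂⟩ := aux_sub F hz2' hδ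
  set S : ℝ := min S₁ S₂ with hSdef
  have hzb : ∀ s ≤ S, |z s| ≤ δ * (-s) := fun s hs => hS₁ s (hs.trans (min_le_left _ _))
  have hFb : ∀ s ≤ S, |F s| ≤ δ * (-s) := fun s hs => hS₂ s (hs.trans (min_le_right _ _))
  set C : ℝ := ∫ s in Set.Iic (0:ℝ), Real.exp (lam * s) * φ s with hC
  have hC0 : 0 ≤ C := by
    apply setIntegral_nonneg measurableSet_Iic
    intro s _; exact mul_nonneg (Real.exp_pos _).le (hφ s)
  set G : ℝ → ℝ := fun t => c * Real.exp ((-(5/4) * lam + 6 * δ) * t)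
      + c * C * Real.exp ((-(1/8) * lam + 8 * δ) * t) with hG
  have hGtend : Tendsto G atTop (nhds 0) := by
    have h1 : Tendsto (fun t : ℝ => Real.exp ((-(5/4) * lam + 6 * δ) * t)) atTop (nhds 0) := by
      rw [Real.tendsto_exp_comp_nhds_zero]
      exact (tendsto_const_mul_atBot_of_neg (by rw [hδdef]; linarith)).mpr tendsto_id
    have h2 : Tendsto (fun t : ℝ => Real.exp ((-(1/8) * lam + 8 * δ) * t)) atTop (nhds 0) := by
      rw [Real.tendsto_exp_comp_nhds_zero]
      exact (tendsto_const_mul_atBot_of_neg (by rw [hδdef]; linarith)).mpr tendsto_id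
    have h3 := (h1.const_mul c).add (h2.const_mul (c * C))
    rw [hG]
    simpa using h3
  obtain ⟨T₁, hT₁⟩ := eventually_atTop.mp (hGtend.eventually_le_const hε)
  refine ⟨max T₁ (max 1 (-S)), fun t ht α hα => ?_⟩
  have ht1 : (1:ℝ) ≤ t := le_trans (le_max_left _ _) ((le_max_right _ _).trans ht)
  have ht0 : (0:ℝ) ≤ t := by linarith
  have htS : -t ≤ S := by
    have : -S ≤ t := le_trans (le_max_right _ _) ((le_max_right _ _).trans ht)
    linarith
  obtain ⟨hB0, hBle⟩ := hB t ht0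
  set J : ℝ := ∫ s in Set.Iic (-t),
      Real.exp ((9 / 8) * lam * s + 2 * |∫ r in (-t)..s, z r| + 2 * |z s|) * φ s with hJ
  have hint1 : IntegrableOn (fun s => Real.exp (lam * s) * φ s) (Set.Iic (-t)) volume :=
    hφint.mono_set (Set.Iic_subset_Iic.mpr (by linarith))
  have hzt : |z (-t)| ≤ δ * t := by
    have := hzb (-t) htS; simpa using this
  have hFt : |F (-t)| ≤ δ * t := by
    have := hFb (-t) htS; simpa using this
  have hJle : J ≤ Real.exp (2 * δ * t) * C := by
    have step1 : J ≤ ∫ s in Set.Iic (-t), Real.exp (2 * δ * t) * (Real.exp (lam * s) * φ s) := by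
      apply integral_mono_of_nonneg
      · exact Filter.Eventually.of_forall
          (fun s => mul_nonneg (Real.exp_pos _).le (hφ s))
      · exact (hint1.const_mul _)
      · refine (ae_restrict_iff' measurableSet_Iic).mpr (Filter.Eventually.of_forall ?_)
        intro s hs
        simp only [Set.mem_Iic] at hs
        have hsS : s ≤ S := hs.trans htS
        have hzs := hzb s hsS
        have hint_eq : (∫ r in (-t)..s, z r) = F s - F (-t) := by
          rw [hF]
          exact (intervalIntegral.integral_interval_sub_left
            (hz.intervalIntegrable _ _) (hz.intervalIntegrable _ _)).symm
        have habs : |∫ r in (-t)..s, z r| ≤ δ * (-s) + δ * t := by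
          rw [hint_eq]
          calc |F s - F (-t)| ≤ |F s| + |F (-t)| := abs_sub _ _
            _ ≤ δ * (-s) + δ * t := by
                have h1 := hFb s hsS
                linarith
        have hs0 : s ≤ 0 := by
          have : S < 0 := lt_of_le_of_lt (min_le_left _ _) hS₁0
          linarith
        have hexp : Real.exp ((9 / 8) * lam * s + 2 * |∫ r in (-t)..s, z r| + 2 * |z s|)
            ≤ Real.exp (2 * δ * t + lam * s) := by
          apply Real.exp_le_exp.mpr
          have hprod : 0 ≤ lam * (-s) := mul_nonneg hlam.le (by linarith)
          have hd : δ = lam / 128 := hδdef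
          nlinarith [habs, hzs, hprod]
        calc (fun a => Real.exp ((9 / 8) * lam * a + 2 * |∫ r in (-t)..a, z r| + 2 * |z a|) * φ a) s
            = Real.exp ((9 / 8) * lam * s + 2 * |∫ r in (-t)..s, z r| + 2 * |z s|) * φ s := rfl
          _ ≤ Real.exp (2 * δ * t + lam * s) * φ s := mul_le_mul_of_nonneg_right hexp (hφ s)
          _ = (fun a => Real.exp (2 * δ * t) * (Real.exp (lam * a) * φ a)) s := by
              simp only [Real.exp_add, mul_assoc]
    have step2 : (∫ s in Set.Iic (-t), Real.exp (2 * δ * t) * (Real.exp (lam * s) * φ s))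
        = Real.exp (2 * δ * t) * ∫ s in Set.Iic (-t), Real.exp (lam * s) * φ s :=
      integral_const_mul _ _
    have step3 : (∫ s in Set.Iic (-t), Real.exp (lam * s) * φ s) ≤ C := by
      apply setIntegral_mono_set hφint
      · exact Filter.Eventually.of_forall
          (fun s => mul_nonneg (Real.exp_pos _).le (hφ s))
      · exact (Set.Iic_subset_Iic.mpr (by linarith : -t ≤ 0)).eventuallyLE
    calc J ≤ _ := step1
      _ = _ := step2
      _ ≤ Real.exp (2 * δ * t) * C := mul_le_mul_of_nonneg_left step3 (Real.exp_nonneg _)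
  have hJ0 : 0 ≤ J := by
    apply setIntegral_nonneg measurableSet_Iic
    intro s _; exact mul_nonneg (Real.exp_pos _).le (hφ s)
  obtain ⟨hα0, hα1⟩ := hα
  have hpre : Real.exp (-(5 / 4) * lam * t - 2 * α * F (-t) - 2 * α * z (-t))
      ≤ Real.exp ((-(5/4) * lam + 4 * δ) * t) := by
    apply Real.exp_le_exp.mpr
    obtain ⟨hF1, hF2⟩ := abs_le.mp hFt
    obtain ⟨hz1', hz2''⟩ := abs_le.mp hzt
    have hδt : 0 ≤ δ * t := by positivity
    have k1 : 2 * α * (-(δ * t)) ≤ 2 * α * F (-t) :=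
      mul_le_mul_of_nonneg_left hF1 (by linarith)
    have k2 : 2 * α * (-(δ * t)) ≤ 2 * α * z (-t) :=
      mul_le_mul_of_nonneg_left hz1' (by linarith)
    have k3 : 2 * α * (δ * t) ≤ 2 * (δ * t) := by nlinarith
    linarith [k1, k2, k3]
  have hBle2 : B t ≤ c * Real.exp (2 * δ * t) *
      (1 + Real.exp ((9/8) * lam * t + 2 * δ * t) * C) := by
    refine hBle.trans ?_
    have e1 : Real.exp (2 * |z (-t)|) ≤ Real.exp (2 * δ * t) :=
      Real.exp_le_exp.mpr (by linarith)
    have e2 : 1 + Real.exp ((9/8) * lam * t) * J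
        ≤ 1 + Real.exp ((9/8) * lam * t + 2 * δ * t) * C := by
      rw [Real.exp_add]
      nlinarith [mul_le_mul_of_nonneg_left hJle (Real.exp_nonneg ((9/8) * lam * t))]
    calc c * Real.exp (2 * |z (-t)|) * (1 + Real.exp ((9/8) * lam * t) * J)
        ≤ c * Real.exp (2 * δ * t) * (1 + Real.exp ((9/8) * lam * t) * J) := by
          apply mul_le_mul_of_nonneg_right (mul_le_mul_of_nonneg_left e1 hc.le)
          nlinarith [Real.exp_nonneg ((9/8) * lam * t), hJ0]
      _ ≤ c * Real.exp (2 * δ * t) * (1 + Real.exp ((9/8) * lam * t + 2 * δ * t) * C) := by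
          apply mul_le_mul_of_nonneg_left e2
          positivity
  calc Real.exp (-(5 / 4) * lam * t - 2 * α * F (-t) - 2 * α * z (-t)) * B t
      ≤ Real.exp ((-(5/4) * lam + 4 * δ) * t) *
          (c * Real.exp (2 * δ * t) * (1 + Real.exp ((9/8) * lam * t + 2 * δ * t) * C)) :=
        mul_le_mul hpre hBle2 hB0 (Real.exp_nonneg _)
    _ = c * (Real.exp ((-(5/4) * lam + 4 * δ) * t) * Real.exp (2 * δ * t))
        + c * C * (Real.exp ((-(5/4) * lam + 4 * δ) * t) * Real.exp (2 * δ * t)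
            * Real.exp ((9/8) * lam * t + 2 * δ * t)) := by ring
    _ = c * Real.exp ((-(5/4) * lam + 4 * δ) * t + 2 * δ * t)
        + c * C * Real.exp ((-(5/4) * lam + 4 * δ) * t + 2 * δ * t
            + ((9/8) * lam * t + 2 * δ * t)) := by
          rw [← Real.exp_add, ← Real.exp_add]
    _ = G t := by
          rw [hG]
          have a1 : (-(5/4) * lam + 4 * δ) * t + 2 * δ * t = (-(5/4) * lam + 6 * δ) * t := by ring
          have a2 : (-(5/4) * lam + 4 * δ) * t + 2 * δ * t + ((9/8) * lam * t + 2 * δ * t)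
              = (-(1/8) * lam + 8 * δ) * t := by ring
          rw [a2, a1]
    _ ≤ ε := hT₁ t (le_trans (le_max_left _ _) ht)
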